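/- arXiv:2512.16780 — 4 statements merged into one kernel-verified Lean document; each statement's English description precedes it below -/
import Mathlib

section
/- In a finite tree (a finite connected acyclic simple graph), any two simple paths of maximum length share at least one vertex. -/
/-!
Suppose two longest paths `p` and `q` were vertex-disjoint. By connectedness there is a
path `s` from a vertex `u` of `p` to a vertex `w` of `q` meeting `p` only in `u` and `q` only
in `w`. The longer half of `p` ending at `u`, followed by `s` and the longer half of `q`
starting at `w`, is a path with at least `|p|/2 + 1 + |q|/2 > |p|` edges, since `|p| = |q|`.
-/

namespace SimpleGraph

variable {V : Type*} {G : SimpleGraph V}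

namespace Walk

theorem IsPath.append {u v w : V} {p : G.Walk u v} {q : G.Walk v w} (hp : p.IsPath)
    (hq : q.IsPath) (h : ∀ x ∈ p.support, x ∈ q.support → x = v) : (p.append q).IsPath := by
  have hq' := hq.support_nodup
  rw [← q.cons_tail_support, List.nodup_cons] at hq'
  rw [isPath_def, support_append, List.nodup_append]
  refine ⟨hp.support_nodup, hq'.2, fun x hx y hy hxy => ?_⟩
  subst hxy
  exact hq'.1 (h x hx (List.mem_of_mem_tail hy) ▸ hy)

theorem exists_prefix_to_first_mem {S : Set V} {x y : V} (r : G.Walk x y) (hy : y ∈ S) :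
    ∃ w ∈ S, ∃ s : G.Walk x w, s.support.Sublist r.support ∧
      ∀ v ∈ s.support, v ∈ S → v = w := by
  induction r with
  | nil => exact ⟨_, hy, nil, .refl _, fun v hv _ => by simpa using hv⟩
  | @cons u _ _ huv r ih =>
    by_cases hu : u ∈ S
    · exact ⟨u, hu, nil, by simp, by simp⟩
    obtain ⟨w, hw, s, hsub, hfirst⟩ := ih hy
    refine ⟨w, hw, cons huv s, by simpa using hsub.cons_cons u, fun v hv hvS => ?_⟩
    rcases List.mem_cons.mp (support_cons huv s ▸ hv) with rfl | hv
    · exact absurd hvS hu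
    · exact hfirst v hv hvS

theorem IsPath.exists_isPath_to_length_le_two_mul [DecidableEq V] {a b u : V} {p : G.Walk a b}
    (hp : p.IsPath) (hu : u ∈ p.support) :
    ∃ (x : V) (r : G.Walk x u), r.IsPath ∧ r.support ⊆ p.support ∧ p.length ≤ 2 * r.length := by
  have hsplit := congrArg length (p.take_spec hu)
  rw [length_append] at hsplit
  rcases le_total (p.dropUntil u hu).length (p.takeUntil u hu).length with h | h
  · exact ⟨a, p.takeUntil u hu, hp.takeUntil hu, p.support_takeUntil_subset_support hu, by omega⟩
  · refine ⟨b, (p.dropUntil u hu).reverse, (hp.dropUntil hu).reverse, ?_, by rw [length_reverse]; omega⟩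
    rw [support_reverse]
    exact fun v hv => p.support_dropUntil_subset_support hu (List.mem_reverse.mp hv)

end Walk

open Walk in
theorem Preconnected.exists_isPath_meeting_only_at_ends (hG : G.Preconnected) {S T : Set V}
    (hS : S.Nonempty) (hT : T.Nonempty) :
    ∃ u ∈ S, ∃ w ∈ T, ∃ s : G.Walk u w, s.IsPath ∧
      (∀ v ∈ s.support, v ∈ S → v = u) ∧ ∀ v ∈ s.support, v ∈ T → v = w := by
  obtain ⟨x, hx⟩ := hS
  obtain ⟨y, hy⟩ := hT
  obtain ⟨r, hr⟩ := hG.exists_isPath x y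
  obtain ⟨w, hw, s₁, hs₁, hs₁T⟩ := r.exists_prefix_to_first_mem hy
  obtain ⟨u, hu, s₂, hs₂, hs₂S⟩ := s₁.reverse.exists_prefix_to_first_mem hx
  rw [support_reverse] at hs₂
  have hs₂s₁ : ∀ v ∈ s₂.support, v ∈ s₁.support := fun v hv =>
    List.mem_reverse.mp (hs₂.subset hv)
  refine ⟨u, hu, w, hw, s₂.reverse, ?_, fun v hv hvS => ?_, fun v hv hvT => ?_⟩
  · rw [isPath_reverse_iff, isPath_def]
    exact hs₂.nodup (List.nodup_reverse.mpr (hs₁.nodup hr.support_nodup))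
  · exact hs₂S v (by simpa using hv) hvS
  · exact hs₁T v (hs₂s₁ v (by simpa using hv)) hvT

end SimpleGraph

open SimpleGraph Walk

theorem longest_paths_share_a_vertex_general {V : Type} (G : SimpleGraph V)
    (hG : G.IsTree) {a b c d : V} (p : G.Walk a b) (q : G.Walk c d)
    (hp : p.IsPath) (hq : q.IsPath)
    (hpmax : ∀ (x y : V) (r : G.Walk x y), r.IsPath → r.support.length ≤ p.support.length)
    (hqmax : ∀ (x y : V) (r : G.Walk x y), r.IsPath → r.support.length ≤ q.support.length) :
    ∃ v : V, v ∈ p.support ∧ v ∈ q.support := by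
  classical
  by_contra! hdisj
  have hlen : q.length = p.length := by
    have := hpmax _ _ q hq
    have := hqmax _ _ p hp
    simp only [length_support] at *
    omega
  obtain ⟨u, hu, w, hw, s, hs, hsp, hsq⟩ :=
    hG.connected.preconnected.exists_isPath_meeting_only_at_ends
      (S := {v | v ∈ p.support}) (T := {v | v ∈ q.support}) ⟨a, p.start_mem_support⟩
      ⟨c, q.start_mem_support⟩
  have hs_pos : 0 < s.length :=
    Nat.pos_of_ne_zero fun h => hdisj u hu (eq_of_length_eq_zero h ▸ hw)
  obtain ⟨x, pu, hpu, hpu_sub, hpu_len⟩ := hp.exists_isPath_to_length_le_two_mul hu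
  obtain ⟨y, qw, hqw, hqw_sub, hqw_len⟩ := hq.exists_isPath_to_length_le_two_mul hw
  have hsqw : (s.append qw.reverse).IsPath :=
    hs.append hqw.reverse fun v hv hv' => hsq v hv (hqw_sub (by simpa using hv'))
  have hglued : (pu.append (s.append qw.reverse)).IsPath := by
    refine hpu.append hsqw fun v hv hv' => ?_
    rcases (mem_support_append_iff _ _).mp hv' with hv' | hv'
    · exact hsp v hv' (hpu_sub hv)
    · exact absurd (hqw_sub (by simpa using hv')) (hdisj v (hpu_sub hv))
  have := hpmax _ _ _ hglued
  simp only [length_support, length_append, length_reverse] at this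
  omega

/-- Any two simple paths of maximum length in a finite tree share at least one vertex.
A tree is a finite connected acyclic simple graph; a simple path is a walk whose
vertices are pairwise distinct (`IsPath`), measured by its number of vertices
(`support.length`). -/
theorem longest_paths_share_a_vertex {V : Type} [Fintype V] (G : SimpleGraph V)
    (hG : G.IsTree) {a b c d : V} (p : G.Walk a b) (q : G.Walk c d)
    (hp : p.IsPath) (hq : q.IsPath)
    (hpmax : ∀ (x y : V) (r : G.Walk x y), r.IsPath → r.support.length ≤ p.support.length)
    (hqmax : ∀ (x y : V) (r : G.Walk x y), r.IsPath → r.support.length ≤ q.support.length) :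
    ∃ v : V, v ∈ p.support ∧ v ∈ q.support :=
  longest_paths_share_a_vertex_general G hG p q hp hq hpmax hqmax
end

section
/- Let X ≥ 3 and n ≥ 1 be natural numbers, and let T be a finite tree on N vertices in which every vertex has degree at most X. If every simple path in T contains at most 2n vertices, then N ≤ 2·((X−1)^n − 1)/(X−2). -/
/-!
Let `a ⋯ b` be a diametral path, of length `D ≤ 2n - 1`, and `uv` its edge with `u` at distance
`D - n` from `a`. Every vertex `w` is closer to exactly one of `u`, `v`, and if `w` is on the side
of `u`, the path from `w` to `b` runs through `u` and `v`, so `dist u w + dist u b ≤ D` forces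
`dist u w < n`; symmetrically on the side of `v`. On the side of `u`, each vertex at distance `j`
from `u` has a neighbour one step closer to `v`, so at most `X - 1` neighbours at distance `j + 1`;
hence there are at most `(X - 1) ^ j` such vertices. Summing the geometric series on both sides
gives `N ≤ 2 ((X - 1) ^ n - 1) / (X - 2)`.
-/

open Finset

namespace SimpleGraph

variable {V : Type*} {G : SimpleGraph V}

lemma Walk.dist_getVert_of_length_eq_dist {a b : V} {p : G.Walk a b}
    (hp : p.length = G.dist a b) {i : ℕ} (hi : i ≤ p.length) :
    G.dist a (p.getVert i) = i ∧ G.dist (p.getVert i) b = p.length - i := by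
  have htake := length_eq_dist_of_subwalk hp (p.isSubwalk_take i)
  have hdrop := length_eq_dist_of_subwalk hp (p.isSubwalk_drop i)
  rw [p.take_length, min_eq_left hi] at htake
  rw [p.drop_length] at hdrop
  exact ⟨htake.symm, hdrop.symm⟩

lemma Walk.dist_add_dist_of_mem_support {a b x : V} {p : G.Walk a b}
    (hp : p.length = G.dist a b) (hx : x ∈ p.support) :
    G.dist a x + G.dist x b = G.dist a b := by
  classical
  rw [← length_eq_dist_of_subwalk hp (p.isSubwalk_takeUntil hx),
    ← length_eq_dist_of_subwalk hp (p.isSubwalk_dropUntil hx), ← hp,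
    ← Walk.length_append, p.take_spec hx]

lemma exists_adj_dist_eq_of_dist_eq_add_one {x y : V} {k : ℕ} (h : G.dist x y = k + 1) :
    ∃ z, G.Adj z y ∧ G.dist x z = k := by
  have hreach : G.Reachable x y := Reachable.of_dist_ne_zero (by omega)
  obtain ⟨p, hp⟩ := hreach.exists_walk_length_eq_dist
  have hk : k < p.length := by omega
  refine ⟨p.getVert k, ?_, (p.dist_getVert_of_length_eq_dist hp hk.le).1⟩
  simpa [show k + 1 = p.length by omega] using p.adj_getVert_succ hk

lemma IsAcyclic.length_eq_dist_of_isPath (hG : G.IsAcyclic) {a b : V} {p : G.Walk a b}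
    (hp : p.IsPath) : p.length = G.dist a b := by
  obtain ⟨q, hq, hql⟩ := p.reachable.exists_path_of_dist
  have hpq : p = q := congrArg Subtype.val ((hG.subsingleton_path a b).elim ⟨p, hp⟩ ⟨q, hq⟩)
  rw [hpq, hql]

lemma IsTree.dist_eq_dist_add_one_add_dist (hG : G.IsTree) {u v w b : V} (hadj : G.Adj u v)
    (hw : G.dist v w = G.dist u w + 1) (hb : G.dist u b = G.dist v b + 1) :
    G.dist w b = G.dist w u + 1 + G.dist v b := by
  obtain ⟨P, hP⟩ := hG.connected.exists_walk_length_eq_dist w u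
  obtain ⟨Q, hQ⟩ := hG.connected.exists_walk_length_eq_dist v b
  -- A vertex `x` common to `P` and `Q` would give `dist v w + dist u b ≤ dist w u + dist v b`.
  have hpath : (P.append (Q.cons hadj)).IsPath := by
    rw [Walk.isPath_def, Walk.support_append, Walk.support_cons, List.tail_cons,
      List.nodup_append]
    refine ⟨(P.isPath_of_length_eq_dist hP).support_nodup,
      (Q.isPath_of_length_eq_dist hQ).support_nodup, ?_⟩
    rintro x hxP _ hxQ rfl
    have hP' := P.dist_add_dist_of_mem_support hP hxP
    have hQ' := Q.dist_add_dist_of_mem_support hQ hxQ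
    have hvw : G.dist v w ≤ G.dist v x + G.dist x w := hG.connected.dist_triangle
    have hub : G.dist u b ≤ G.dist u x + G.dist x b := hG.connected.dist_triangle
    rw [dist_comm (u := w) (v := x), dist_comm (u := x) (v := u),
      dist_comm (u := w) (v := u)] at hP'
    omega
  have hlen := hG.isAcyclic.length_eq_dist_of_isPath hpath
  rw [Walk.length_append, Walk.length_cons, hP, hQ] at hlen
  omega

section SideSphere

variable [Fintype V]

noncomputable def sideSphere (G : SimpleGraph V) (u v : V) (j : ℕ) : Finset V :=
  {w | G.dist u w = j ∧ G.dist v w = j + 1}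

variable {u v w : V} {j : ℕ}

@[simp]
lemma mem_sideSphere : w ∈ G.sideSphere u v j ↔ G.dist u w = j ∧ G.dist v w = j + 1 := by
  simp [sideSphere]

lemma sideSphere_zero_subset (hadj : G.Adj u v) : G.sideSphere u v 0 ⊆ {u} := by
  intro w hw
  rw [mem_sideSphere] at hw
  have hreach : G.Reachable u w :=
    hadj.reachable.trans (Reachable.of_dist_ne_zero (by omega))
  exact mem_singleton.2 ((hreach.dist_eq_zero_iff.1 hw.1).symm)

lemma exists_adj_mem_sideSphere (hadj : G.Adj u v) (hw : w ∈ G.sideSphere u v (j + 1)) :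
    ∃ p ∈ G.sideSphere u v j, G.Adj p w := by
  rw [mem_sideSphere] at hw
  obtain ⟨p, hpw, hp⟩ := exists_adj_dist_eq_of_dist_eq_add_one hw.1
  refine ⟨p, mem_sideSphere.2 ⟨hp, ?_⟩, hpw⟩
  have hvw := hpw.diff_dist_adj (u := v)
  have hpv := hadj.diff_dist_adj (u := p)
  rw [dist_comm (u := p) (v := v), dist_comm (u := p) (v := u)] at hpv
  omega

variable [DecidableRel G.Adj] {X : ℕ}

lemma card_sideSphere_succ_le (hadj : G.Adj u v) (hdeg : ∀ w, G.degree w ≤ X) (j : ℕ) :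
    #(G.sideSphere u v (j + 1)) ≤ (X - 1) * #(G.sideSphere u v j) := by
  classical
  set children : V → Finset V :=
    fun p ↦ {w ∈ G.neighborFinset p | w ∈ G.sideSphere u v (j + 1)}
  have hcover : G.sideSphere u v (j + 1) ⊆ (G.sideSphere u v j).biUnion children := by
    intro w hw
    obtain ⟨p, hp, hpw⟩ := exists_adj_mem_sideSphere hadj hw
    exact mem_biUnion.2 ⟨p, hp, mem_filter.2 ⟨(mem_neighborFinset _ _ _).2 hpw, hw⟩⟩
  have hchildren : ∀ p ∈ G.sideSphere u v j, #(children p) ≤ X - 1 := by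
    intro p hp
    -- the neighbour of `p` one step closer to `v` is not a child
    obtain ⟨s, hsp, hs⟩ := exists_adj_dist_eq_of_dist_eq_add_one (mem_sideSphere.1 hp).2
    have hsub : children p ⊆ (G.neighborFinset p).erase s := by
      intro w hw
      simp only [children, mem_filter, mem_sideSphere] at hw
      exact mem_erase.2 ⟨by rintro rfl; omega, hw.1⟩
    calc #(children p) ≤ #((G.neighborFinset p).erase s) := card_le_card hsub
      _ = G.degree p - 1 := by
        rw [card_erase_of_mem ((mem_neighborFinset _ _ _).2 hsp.symm),
          card_neighborFinset_eq_degree]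
      _ ≤ X - 1 := Nat.sub_le_sub_right (hdeg p) 1
  calc #(G.sideSphere u v (j + 1)) ≤ ∑ p ∈ G.sideSphere u v j, #(children p) :=
        (card_le_card hcover).trans card_biUnion_le
    _ ≤ #(G.sideSphere u v j) • (X - 1) := sum_le_card_nsmul _ _ _ hchildren
    _ = (X - 1) * #(G.sideSphere u v j) := by rw [smul_eq_mul, mul_comm]

lemma card_sideSphere_le (hadj : G.Adj u v) (hdeg : ∀ w, G.degree w ≤ X) (j : ℕ) :
    #(G.sideSphere u v j) ≤ (X - 1) ^ j := by
  induction j with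
  | zero => simpa using card_le_card (sideSphere_zero_subset hadj)
  | succ j ih =>
    calc #(G.sideSphere u v (j + 1)) ≤ (X - 1) * #(G.sideSphere u v j) :=
          card_sideSphere_succ_le hadj hdeg j
      _ ≤ (X - 1) * (X - 1) ^ j := Nat.mul_le_mul_left _ ih
      _ = (X - 1) ^ (j + 1) := (pow_succ' _ _).symm

lemma card_filter_dist_eq_dist_add_one_le (hadj : G.Adj u v) (hdeg : ∀ w, G.degree w ≤ X)
    {n : ℕ} (hside : ∀ w, G.dist v w = G.dist u w + 1 → G.dist u w < n) :
    #{w | G.dist v w = G.dist u w + 1} ≤ ∑ j ∈ range n, (X - 1) ^ j := by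
  classical
  have hcover : ({w | G.dist v w = G.dist u w + 1} : Finset V) ⊆
      (range n).biUnion (G.sideSphere u v) := by
    intro w hw
    rw [mem_filter] at hw
    exact mem_biUnion.2 ⟨_, mem_range.2 (hside w hw.2), mem_sideSphere.2 ⟨rfl, hw.2⟩⟩
  exact (card_le_card hcover).trans
    (card_biUnion_le.trans (sum_le_sum fun j _ ↦ card_sideSphere_le hadj hdeg j))

end SideSphere

lemma IsTree.exists_adj_forall_dist_lt [Finite V] [Nontrivial V] (hG : G.IsTree) {n : ℕ}
    (hdist : ∀ a b, G.dist a b < 2 * n) :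
    ∃ u v, G.Adj u v ∧ (∀ w, G.dist v w = G.dist u w + 1 → G.dist u w < n) ∧
      (∀ w, G.dist u w = G.dist v w + 1 → G.dist v w < n) := by
  obtain ⟨⟨a, b⟩, hab⟩ := Finite.exists_max fun q : V × V ↦ G.dist q.1 q.2
  obtain ⟨p, hp⟩ := hG.connected.exists_walk_length_eq_dist a b
  have hpos : 0 < p.length := by
    obtain ⟨x, y, hxy⟩ := exists_pair_ne V
    exact hp ▸ (hG.connected.pos_dist_of_ne hxy).trans_le (hab (x, y))
  have hlt : p.length < 2 * n := hp ▸ hdist a b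
  -- `uv` is the edge of the diametral path `p` with `u` at distance `p.length - n` from `a`
  set k := p.length - n
  have hk : k < p.length := by omega
  obtain ⟨hau, hub⟩ := p.dist_getVert_of_length_eq_dist hp hk.le
  obtain ⟨hav, hvb⟩ := p.dist_getVert_of_length_eq_dist hp (i := k + 1) hk
  have hadj := p.adj_getVert_succ hk
  set u := p.getVert k
  set v := p.getVert (k + 1)
  refine ⟨_, _, hadj, fun w hw ↦ ?_, fun w hw ↦ ?_⟩
  · have hwb := hG.dist_eq_dist_add_one_add_dist hadj hw (b := b) (by omega)
    have hmax : G.dist w b ≤ G.dist a b := hab (w, b)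
    rw [dist_comm (u := w) (v := u)] at hwb
    omega
  · rw [dist_comm (u := a)] at hau hav
    have hwa := hG.dist_eq_dist_add_one_add_dist hadj.symm hw (b := a) (by omega)
    have hmax : G.dist w a ≤ G.dist a b := hab (w, a)
    rw [dist_comm (u := w) (v := v)] at hwa
    omega

theorem IsTree.card_le_two_mul_sum_pow [Fintype V] [DecidableRel G.Adj] (hG : G.IsTree)
    {X n : ℕ} (hdeg : ∀ w, G.degree w ≤ X) (hdist : ∀ a b, G.dist a b < 2 * n) :
    Fintype.card V ≤ 2 * ∑ j ∈ range n, (X - 1) ^ j := by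
  classical
  rcases subsingleton_or_nontrivial V with hV | hV
  · have h0 : 0 ∈ range n := by
      have := hdist hG.connected.nonempty.some hG.connected.nonempty.some
      exact mem_range.2 (by omega)
    calc Fintype.card V ≤ 1 := Fintype.card_le_one_iff_subsingleton.2 hV
      _ ≤ ∑ j ∈ range n, (X - 1) ^ j := by
        simpa using single_le_sum (f := fun j ↦ (X - 1) ^ j) (fun _ _ ↦ Nat.zero_le _) h0
      _ ≤ 2 * ∑ j ∈ range n, (X - 1) ^ j := Nat.le_mul_of_pos_left _ two_pos
  · obtain ⟨u, v, hadj, hu, hv⟩ := hG.exists_adj_forall_dist_lt hdist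
    have hcover : (univ : Finset V) ⊆
        ({w | G.dist v w = G.dist u w + 1} : Finset V) ∪
          ({w | G.dist u w = G.dist v w + 1} : Finset V) := by
      intro w _
      have := hG.dist_eq_dist_add_one_of_adj w hadj
      rw [dist_comm (u := w), dist_comm (u := w)] at this
      simp only [mem_union, mem_filter, mem_univ, true_and]
      tauto
    calc Fintype.card V
        ≤ #{w | G.dist v w = G.dist u w + 1} + #{w | G.dist u w = G.dist v w + 1} :=
          (card_le_card hcover).trans (card_union_le _ _)
      _ ≤ 2 * ∑ j ∈ range n, (X - 1) ^ j := by
        have := card_filter_dist_eq_dist_add_one_le hadj hdeg hu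
        have := card_filter_dist_eq_dist_add_one_le hadj.symm hdeg hv
        omega

end SimpleGraph

theorem tree_size_bound_even_diameter_general {V : Type} [Fintype V] (G : SimpleGraph V)
    [DecidableRel G.Adj] (hG : G.IsTree) (X n : ℕ) (hX : 3 ≤ X)
    (hdeg : ∀ v : V, G.degree v ≤ X)
    (hpath : ∀ (a b : V) (p : G.Walk a b), p.IsPath → p.support.length ≤ 2 * n) :
    (Fintype.card V : ℚ) ≤ 2 * (((X : ℚ) - 1) ^ n - 1) / ((X : ℚ) - 2) := by
  have hdist : ∀ a b, G.dist a b < 2 * n := fun a b ↦ by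
    obtain ⟨p, hp, hlen⟩ := hG.connected.exists_path_of_dist a b
    have := hpath a b p hp
    rw [SimpleGraph.Walk.length_support] at this
    omega
  have hgeom :
      ∑ j ∈ range n, ((X - 1 : ℕ) : ℚ) ^ j = ((X - 1 : ℚ) ^ n - 1) / (X - 2 : ℚ) := by
    have hX' : (3 : ℚ) ≤ X := by exact_mod_cast hX
    rw [Nat.cast_sub (by omega), Nat.cast_one, geom_sum_eq (by linarith) n, sub_sub,
      one_add_one_eq_two]
  calc (Fintype.card V : ℚ) ≤ 2 * ∑ j ∈ range n, ((X - 1 : ℕ) : ℚ) ^ j := by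
        exact_mod_cast hG.card_le_two_mul_sum_pow hdeg hdist
    _ = 2 * (((X : ℚ) - 1) ^ n - 1) / ((X : ℚ) - 2) := by rw [hgeom, mul_div_assoc]

/-- If every vertex of a finite tree `T` has degree at most `X` (where `X ≥ 3`) and
every simple path of `T` contains at most `2·n` vertices (where `n ≥ 1`), then the
number `N` of vertices satisfies `N ≤ 2·((X−1)^n − 1)/(X−2)`. -/
theorem tree_size_bound_even_diameter {V : Type} [Fintype V] (G : SimpleGraph V)
    [DecidableRel G.Adj] (hG : G.IsTree) (X n : ℕ) (hX : 3 ≤ X) (hn : 1 ≤ n)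
    (hdeg : ∀ v : V, G.degree v ≤ X)
    (hpath : ∀ (a b : V) (p : G.Walk a b), p.IsPath → p.support.length ≤ 2 * n) :
    (Fintype.card V : ℚ) ≤ 2 * (((X : ℚ) - 1) ^ n - 1) / ((X : ℚ) - 2) :=
  tree_size_bound_even_diameter_general G hG X n hX hdeg hpath
end

section
/- Let G be a finite connected simple graph on N ≥ 1 vertices in which every vertex has degree at most X, where X > 2. Then G contains a simple path with at least min{ 2·⌈log_{X−1}((X−2)·(N−1)/X + 1)⌉ + 1 , 2·⌈log_{X−1}((X−2)·N/2 + 1)⌉ } vertices. -/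
open SimpleGraph Finset

set_option linter.unusedSectionVars false

section AuxLemmas

variable {V : Type} [Fintype V] [DecidableEq V] {G : SimpleGraph V} [DecidableRel G.Adj]

lemma aux_pred (hconn : G.Connected) (c u : V) (j : ℕ) (h : G.dist c u = j + 1) :
    ∃ w, G.Adj w u ∧ G.dist c w = j := by
  obtain ⟨p, hp⟩ := (hconn u c).exists_walk_length_eq_dist
  rw [SimpleGraph.dist_comm] at hp
  rw [h] at hp
  cases p with
  | nil => simp at hp
  | @cons _ w _ hadj q =>
    refine ⟨w, hadj.symm, ?_⟩
    have h1 : G.dist c w ≤ j := by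
      rw [SimpleGraph.dist_comm]
      have := SimpleGraph.dist_le q
      simp only [Walk.length_cons] at hp
      omega
    have hwu : G.dist w u = 1 := SimpleGraph.dist_eq_one_iff_adj.mpr hadj.symm
    have h2 : G.dist c u ≤ G.dist c w + G.dist w u := hconn.dist_triangle
    omega

/-- Distance between vertices along a walk. -/

lemma aux_dist_getVert (hconn : G.Connected) {a b : V} (p : G.Walk a b) :
    ∀ i j, i ≤ j → j ≤ p.length → G.dist (p.getVert i) (p.getVert j) ≤ j - i := by
  intro i j hij hj
  induction j, hij using Nat.le_induction with
  | base => simp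
  | succ j hij ih =>
    have hadj : G.Adj (p.getVert j) (p.getVert (j + 1)) := p.adj_getVert_succ (by omega)
    have h1 : G.dist (p.getVert j) (p.getVert (j+1)) = 1 := SimpleGraph.dist_eq_one_iff_adj.mpr hadj
    have h2 : G.dist (p.getVert i) (p.getVert (j+1)) ≤
        G.dist (p.getVert i) (p.getVert j) + G.dist (p.getVert j) (p.getVert (j+1)) :=
      hconn.dist_triangle
    have := ih (by omega)
    omega

lemma aux_suffix {a b : V} (p : G.Walk a b) (hp : p.IsPath) (i : ℕ) :
    ∃ q : G.Walk (p.getVert i) b, q.IsPath ∧ q.length = p.length - i ∧ q.support ⊆ p.support := by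
  induction p generalizing i with
  | nil =>
    rename_i u
    have hg : (Walk.nil : G.Walk u u).getVert i = u := Walk.getVert_of_length_le _ (by simp)
    exact ⟨Walk.nil.copy hg.symm rfl, by simp, by simp, by simp [hg]⟩
  | @cons u v w h q ih =>
    cases i with
    | zero =>
      exact ⟨(Walk.cons h q).copy (Walk.getVert_zero _).symm rfl, by simpa using hp, by simp, by simp⟩
    | succ i =>
      obtain ⟨r, hr1, hr2, hr3⟩ := ih hp.of_cons i
      refine ⟨r.copy (Walk.getVert_cons_succ _ h).symm rfl, by simpa using hr1, by simpa using hr2, ?_⟩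
      intro x hx
      simp only [Walk.support_copy] at hx
      exact List.mem_cons_of_mem _ (hr3 hx)

/-- A prefix of a path, reversed: a path from `getVert i` back to the start. -/

lemma aux_prefix {a b : V} (p : G.Walk a b) (hp : p.IsPath) (i : ℕ) (hi : i ≤ p.length) :
    ∃ q : G.Walk (p.getVert i) a, q.IsPath ∧ q.length = i ∧ q.support ⊆ p.support := by
  obtain ⟨r, hr1, hr2, hr3⟩ := aux_suffix p.reverse hp.reverse (p.length - i)
  have he : p.reverse.getVert (p.length - i) = p.getVert i := by
    rw [Walk.getVert_reverse]
    congr 1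
    omega
  refine ⟨r.copy he rfl, by simpa using hr1, ?_, ?_⟩
  · simp only [Walk.length_copy, hr2, Walk.length_reverse]
    omega
  · intro x hx
    simp only [Walk.support_copy] at hx
    have := hr3 hx
    rwa [Walk.support_reverse, List.mem_reverse] at this

lemma aux_count (hconn : G.Connected) (X Y D : ℕ) (hX : 1 ≤ X)
    (hdeg : ∀ v, G.degree v ≤ X) (A : Finset V) (c : V)
    (hY : (G.neighborFinset c ∩ A).card ≤ Y)
    (hdown : ∀ u ∈ A, ∀ j, G.dist c u = j + 1 → ∃ w ∈ A, G.Adj w u ∧ G.dist c w = j)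
    (hA : ∀ u ∈ A, G.dist c u ≤ D) :
    A.card ≤ 1 + Y * ∑ j ∈ Finset.range D, (X - 1) ^ j := by
  set S : ℕ → Finset V := fun j => A.filter (fun u => G.dist c u = j) with hS
  have hS0 : (S 0).card ≤ 1 := by
    refine Finset.card_le_one.mpr ?_
    intro x hx y hy
    simp only [hS, Finset.mem_filter] at hx hy
    rw [← (hconn.dist_eq_zero_iff).mp hx.2, ← (hconn.dist_eq_zero_iff).mp hy.2]
  -- each sphere is covered by neighbours of the previous sphere
  have hstep : ∀ j, (S (j + 1)).card ≤ ∑ w ∈ S j, (G.neighborFinset w ∩ S (j + 1)).card := by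
    intro j
    have hsub : S (j + 1) ⊆ (S j).biUnion (fun w => G.neighborFinset w ∩ S (j + 1)) := by
      intro u hu
      simp only [hS, Finset.mem_filter] at hu
      obtain ⟨w, hwA, hadj, hdw⟩ := hdown u hu.1 j hu.2
      refine Finset.mem_biUnion.mpr ⟨w, ?_, ?_⟩
      · simp only [hS, Finset.mem_filter]; exact ⟨hwA, hdw⟩
      · simp only [Finset.mem_inter, SimpleGraph.mem_neighborFinset, hS, Finset.mem_filter]
        exact ⟨hadj, hu.1, hu.2⟩
    exact (Finset.card_le_card hsub).trans (Finset.card_biUnion_le)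
  have hS1 : (S 1).card ≤ Y := by
    refine (Finset.card_le_card ?_).trans hY
    intro u hu
    simp only [hS, Finset.mem_filter] at hu
    simp only [Finset.mem_inter, SimpleGraph.mem_neighborFinset]
    exact ⟨SimpleGraph.dist_eq_one_iff_adj.mp hu.2, hu.1⟩
  have hSd : ∀ j, 1 ≤ j → ∀ w ∈ S j, (G.neighborFinset w ∩ S (j + 1)).card ≤ X - 1 := by
    intro j hj w hw
    simp only [hS, Finset.mem_filter] at hw
    obtain ⟨j', rfl⟩ : ∃ j', j = j' + 1 := ⟨j - 1, by omega⟩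
    obtain ⟨x, hadj, hdx⟩ := aux_pred hconn c w j' hw.2
    have hxmem : x ∈ G.neighborFinset w := by
      simp only [SimpleGraph.mem_neighborFinset]; exact hadj.symm
    have hxnot : x ∉ S (j' + 1 + 1) := by
      simp only [hS, Finset.mem_filter]
      rintro ⟨-, hx2⟩; omega
    have hsub : G.neighborFinset w ∩ S (j' + 1 + 1) ⊆ (G.neighborFinset w).erase x := by
      intro y hy
      simp only [Finset.mem_inter] at hy
      refine Finset.mem_erase.mpr ⟨?_, hy.1⟩
      rintro rfl; exact hxnot hy.2
    calc (G.neighborFinset w ∩ S (j' + 1 + 1)).card ≤ ((G.neighborFinset w).erase x).card :=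
          Finset.card_le_card hsub
      _ = G.degree w - 1 := by rw [Finset.card_erase_of_mem hxmem, SimpleGraph.card_neighborFinset_eq_degree]
      _ ≤ X - 1 := by have := hdeg w; omega
  have hind : ∀ j, (S (j + 1)).card ≤ Y * (X - 1) ^ j := by
    intro j
    induction j with
    | zero => simpa using hS1
    | succ j ih =>
      calc (S (j + 1 + 1)).card ≤ ∑ w ∈ S (j + 1), (G.neighborFinset w ∩ S (j + 1 + 1)).card :=
            hstep (j + 1)
        _ ≤ ∑ _w ∈ S (j + 1), (X - 1) := Finset.sum_le_sum (fun w hw => hSd (j + 1) (by omega) w hw)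
        _ = (S (j + 1)).card * (X - 1) := by rw [Finset.sum_const, smul_eq_mul]
        _ ≤ Y * (X - 1) ^ j * (X - 1) := Nat.mul_le_mul_right _ ih
        _ = Y * (X - 1) ^ (j + 1) := by ring
  have hsub : A ⊆ (Finset.range (D + 1)).biUnion S := by
    intro u hu
    refine Finset.mem_biUnion.mpr ⟨G.dist c u, ?_, ?_⟩
    · simp only [Finset.mem_range]; exact Nat.lt_succ_of_le (hA u hu)
    · simp [hS, Finset.mem_filter, hu]
  calc A.card ≤ ∑ j ∈ Finset.range (D + 1), (S j).card :=
        (Finset.card_le_card hsub).trans Finset.card_biUnion_le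
    _ = (∑ j ∈ Finset.range D, (S (j + 1)).card) + (S 0).card := Finset.sum_range_succ' _ _
    _ ≤ (∑ j ∈ Finset.range D, Y * (X - 1) ^ j) + 1 := by
        exact Nat.add_le_add (Finset.sum_le_sum fun j _ => hind j) hS0
    _ = 1 + Y * ∑ j ∈ Finset.range D, (X - 1) ^ j := by rw [Finset.mul_sum]; ring

lemma aux_key (hconn : G.Connected) {a b : V} (p : G.Walk a b) (hp : p.IsPath)
    (hmax : ∀ (x y : V) (q : G.Walk x y), q.IsPath → q.length ≤ p.length) (u : V) :
    ∃ i, i ≤ p.length ∧ G.dist (p.getVert i) u ≤ i ∧ G.dist (p.getVert i) u + i ≤ p.length := by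
  obtain ⟨w, hwmem, hwmin⟩ := Finset.exists_min_image p.support.toFinset
    (fun w => G.dist w u) ⟨a, by simp [Walk.start_mem_support]⟩
  rw [List.mem_toFinset] at hwmem
  obtain ⟨q0, hq0path, hq0len⟩ := hconn.exists_path_of_dist w u
  set d := G.dist w u with hd
  have hdisj : ∀ x ∈ q0.support, x ∈ p.support → x = w := by
    intro x hx hxp
    obtain ⟨t, hgt, ht⟩ := Walk.mem_support_iff_exists_getVert.mp hx
    obtain ⟨s, hs_path, hs_len, hs_sub⟩ := aux_suffix q0 hq0path t
    have h1 : G.dist x u ≤ d - t := by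
      rw [← hgt]
      exact (SimpleGraph.dist_le s).trans (by rw [hs_len, hq0len])
    have h2 : d ≤ G.dist x u := hwmin x (List.mem_toFinset.mpr hxp)
    rw [hq0len] at ht
    have ht0 : t = 0 := by omega
    rw [← hgt, ht0, Walk.getVert_zero]
  obtain ⟨i, hgi, hi⟩ := Walk.mem_support_iff_exists_getVert.mp hwmem
  have hq0' : G.Walk (p.getVert i) u := q0.copy hgi.symm rfl
  -- general splice bound
  have splice : ∀ (z : V) (r : G.Walk (p.getVert i) z), r.IsPath → r.support ⊆ p.support →
      r.length + d ≤ p.length := by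
    intro z r hr hrsub
    set q0' : G.Walk (p.getVert i) u := q0.copy hgi.symm rfl with hq0'def
    have hlen : (r.reverse.append q0').length = r.length + d := by
      rw [Walk.length_append, Walk.length_reverse, hq0'def, Walk.length_copy, hq0len]
    have hpath : (r.reverse.append q0').IsPath := by
      rw [Walk.isPath_def, Walk.support_append]
      refine List.Nodup.append ?_ ?_ ?_
      · rw [Walk.support_reverse]
        exact List.nodup_reverse.mpr hr.support_nodup
      · rw [hq0'def, Walk.support_copy]
        exact hq0path.support_nodup.tail
      · rw [hq0'def, Walk.support_copy, Walk.support_reverse]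
        intro x hx hx'
        have hx1 : x ∈ p.support := hrsub (List.mem_reverse.mp hx)
        have hx2 : x ∈ q0.support := List.mem_of_mem_tail hx'
        have hxw : x = w := hdisj x hx2 hx1
        have : w ∉ q0.support.tail := by
          have hn := hq0path.support_nodup
          rw [Walk.support_eq_cons] at hn
          exact (List.nodup_cons.mp hn).1
        exact this (hxw ▸ hx')
    have := hmax _ _ _ hpath
    omega
  refine ⟨i, hi, ?_, ?_⟩
  · -- d ≤ i, from splicing with the suffix
    obtain ⟨s, hs1, hs2, hs3⟩ := aux_suffix p hp i
    have := splice b s hs1 hs3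
    rw [hgi]
    omega
  · -- d + i ≤ p.length, from splicing with the prefix
    obtain ⟨r, hr1, hr2, hr3⟩ := aux_prefix p hp i hi
    have := splice a r hr1 hr3
    rw [hgi]
    omega

end AuxLemmas

/-- Let `G` be a finite connected simple graph on `N ≥ 1` vertices in which every vertex
has degree at most `X`, where `X > 2`.  Then `G` contains a simple path with at least
`min{ 2·⌈log_{X−1}((X−2)·(N−1)/X + 1)⌉ + 1 , 2·⌈log_{X−1}((X−2)·N/2 + 1)⌉ }` vertices.
The length of a simple path is its number of vertices, i.e. `p.support.length`. -/
theorem exists_long_simple_path {V : Type} [Fintype V] (G : SimpleGraph V)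
    [DecidableRel G.Adj] (hconn : G.Connected) (hcard : 1 ≤ Fintype.card V)
    (X : ℕ) (hX : 2 < X) (hdeg : ∀ v : V, G.degree v ≤ X) :
    ∃ (a b : V) (p : G.Walk a b), p.IsPath ∧
      min (2 * ⌈Real.logb ((X : ℝ) - 1)
              (((X : ℝ) - 2) * ((Fintype.card V : ℝ) - 1) / (X : ℝ) + 1)⌉ + 1)
          (2 * ⌈Real.logb ((X : ℝ) - 1)
              (((X : ℝ) - 2) * (Fintype.card V : ℝ) / 2 + 1)⌉)
        ≤ (p.support.length : ℤ) := by
  classical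
  set N := Fintype.card V with hN
  have hne : Nonempty V := Fintype.card_pos_iff.mp (by omega)
  obtain ⟨v0⟩ := hne
  -- a longest path
  set P : ℕ → Prop := fun m => ∃ (x y : V) (q : G.Walk x y), q.IsPath ∧ q.length = m with hP
  have hP0 : P 0 := ⟨v0, v0, Walk.nil, Walk.IsPath.nil, rfl⟩
  have hbound : ∀ m, P m → m ≤ N - 1 := by
    rintro m ⟨x, y, q, hq, rfl⟩
    have h1 : q.support.length ≤ N := hq.support_nodup.length_le_card
    rw [Walk.length_support] at h1
    omega
  set n := Nat.findGreatest P (N - 1) with hn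
  have hPn : P n := Nat.findGreatest_spec (Nat.zero_le _) hP0
  obtain ⟨a, b, p, hp, hplen⟩ := hPn
  have hmax : ∀ (x y : V) (q : G.Walk x y), q.IsPath → q.length ≤ p.length := by
    intro x y q hq
    rw [hplen]
    exact Nat.le_findGreatest (hbound _ ⟨x, y, q, hq, rfl⟩) ⟨x, y, q, hq, rfl⟩
  refine ⟨a, b, p, hp, ?_⟩
  rw [Walk.length_support, hplen]
  -- real-number setup
  set R : ℝ := (X : ℝ) - 1 with hR
  have hX3 : (3 : ℝ) ≤ (X : ℝ) := by exact_mod_cast hX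
  have hR1 : 1 < R := by rw [hR]; linarith
  have hN1 : (1 : ℝ) ≤ (N : ℝ) := by exact_mod_cast hcard
  have hgeom : ∀ k : ℕ, ((∑ j ∈ Finset.range k, (X - 1) ^ j : ℕ) : ℝ)
      = (R ^ k - 1) / (R - 1) := by
    intro k
    rw [← geom_sum_eq (by linarith : R ≠ 1)]
    push_cast [Nat.cast_sub (by omega : 1 ≤ X)]
    rfl
  rcases Nat.even_or_odd n with ⟨k, hk⟩ | ⟨k, hk⟩
  · -- n = 2k : odd number of vertices, use the first bound
    set c := p.getVert k with hc
    have hecc : ∀ u, G.dist c u ≤ k := by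
      intro u
      obtain ⟨i, hi, h1, h2⟩ := aux_key hconn p hp hmax u
      rw [hplen] at hi h2
      rcases le_or_gt i k with hik | hik
      · have hd : G.dist (p.getVert k) (p.getVert i) ≤ k - i := by
          rw [SimpleGraph.dist_comm]
          exact aux_dist_getVert hconn p i k hik (by omega)
        have ht : G.dist c u ≤ G.dist c (p.getVert i) + G.dist (p.getVert i) u :=
          hconn.dist_triangle
        rw [hc] at ht ⊢
        omega
      · have hd : G.dist (p.getVert k) (p.getVert i) ≤ i - k :=
          aux_dist_getVert hconn p k i (by omega) (by omega)
        have ht : G.dist c u ≤ G.dist c (p.getVert i) + G.dist (p.getVert i) u :=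
          hconn.dist_triangle
        rw [hc] at ht ⊢
        omega
    have hcount : N ≤ 1 + X * ∑ j ∈ Finset.range k, (X - 1) ^ j := by
      have := aux_count hconn X X k (by omega) hdeg Finset.univ c
        (by simpa using (hdeg c))
        (by
          intro u _ j hj
          obtain ⟨w, hw1, hw2⟩ := aux_pred hconn c u j hj
          exact ⟨w, Finset.mem_univ w, hw1, hw2⟩)
        (fun u _ => hecc u)
      simpa [hN] using this
    -- conclude with the left term of the min
    refine le_trans (min_le_left _ _) ?_
    have hcR : (N : ℝ) ≤ 1 + X * ((R ^ k - 1) / (R - 1)) := by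
      have := hgeom k
      exact_mod_cast (by exact_mod_cast hcount : (N:ℝ) ≤ 1 + X * ((∑ j ∈ Finset.range k, (X - 1) ^ j : ℕ) : ℝ)).trans (by rw [this])
    have harg : ((X : ℝ) - 2) * ((N : ℝ) - 1) / (X : ℝ) + 1 ≤ R ^ k := by
      have hX0 : (0 : ℝ) < X := by linarith
      have hR2 : (0 : ℝ) < R - 1 := by rw [hR]; linarith
      rw [div_add' _ _ _ (ne_of_gt hX0), div_le_iff₀ hX0]
      have h2 : ((N : ℝ) - 1) * (R - 1) ≤ X * (R ^ k - 1) := by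
        have h3 : (N : ℝ) - 1 ≤ X * ((R ^ k - 1) / (R - 1)) := by linarith
        calc ((N : ℝ) - 1) * (R - 1) ≤ (X * ((R ^ k - 1) / (R - 1))) * (R - 1) := by
              apply mul_le_mul_of_nonneg_right h3 (le_of_lt hR2)
          _ = X * (R ^ k - 1) := by field_simp
      have : R - 1 = (X : ℝ) - 2 := by rw [hR]; ring
      rw [this] at h2
      nlinarith [h2]
    have hargpos : (0 : ℝ) < ((X : ℝ) - 2) * ((N : ℝ) - 1) / (X : ℝ) + 1 := by
      have : (0:ℝ) ≤ ((X : ℝ) - 2) * ((N : ℝ) - 1) / (X : ℝ) :=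
        div_nonneg (mul_nonneg (by linarith) (by linarith)) (by linarith)
      linarith
    have hlogb : Real.logb R (((X : ℝ) - 2) * ((N : ℝ) - 1) / (X : ℝ) + 1) ≤ k := by
      have h1 := Real.logb_le_logb_of_le hR1 hargpos harg
      rwa [Real.logb_pow, Real.logb_self_eq_one (by linarith), mul_one] at h1
    have hceil : ⌈Real.logb R (((X : ℝ) - 2) * ((N : ℝ) - 1) / (X : ℝ) + 1)⌉ ≤ (k : ℤ) :=
      Int.ceil_le.mpr (by exact_mod_cast hlogb)
    simp only [hR, hN] at hceil ⊢
    push_cast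
    omega
  · -- n = 2k + 1 : even number of vertices, use the second bound
    set c1 := p.getVert k with hc1
    set c2 := p.getVert (k + 1) with hc2
    have hadj : G.Adj c1 c2 := p.adj_getVert_succ (by omega)
    have hd12 : G.dist c1 c2 = 1 := SimpleGraph.dist_eq_one_iff_adj.mpr hadj
    have hd21 : G.dist c2 c1 = 1 := by rwa [SimpleGraph.dist_comm] at hd12
    have hmin : ∀ u, G.dist c1 u ≤ k ∨ G.dist c2 u ≤ k := by
      intro u
      obtain ⟨i, hi, h1, h2⟩ := aux_key hconn p hp hmax u
      rw [hplen] at hi h2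
      rcases le_or_gt i k with hik | hik
      · left
        have hd : G.dist (p.getVert k) (p.getVert i) ≤ k - i := by
          rw [SimpleGraph.dist_comm]
          exact aux_dist_getVert hconn p i k hik (by omega)
        have ht : G.dist c1 u ≤ G.dist c1 (p.getVert i) + G.dist (p.getVert i) u :=
          hconn.dist_triangle
        rw [hc1] at ht ⊢
        omega
      · right
        have hd : G.dist (p.getVert (k+1)) (p.getVert i) ≤ i - (k+1) :=
          aux_dist_getVert hconn p (k+1) i (by omega) (by omega)
        have ht : G.dist c2 u ≤ G.dist c2 (p.getVert i) + G.dist (p.getVert i) u :=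
          hconn.dist_triangle
        rw [hc2] at ht ⊢
        omega
    set A : Finset V := Finset.univ.filter (fun u => G.dist c1 u ≤ G.dist c2 u) with hA
    set B : Finset V := Finset.univ.filter (fun u => ¬ (G.dist c1 u ≤ G.dist c2 u)) with hB
    have hcountA : A.card ≤ 1 + (X - 1) * ∑ j ∈ Finset.range k, (X - 1) ^ j := by
      refine aux_count hconn X (X - 1) k (by omega) hdeg A c1 ?_ ?_ ?_
      · have hc2mem : c2 ∈ G.neighborFinset c1 := by
          simp [SimpleGraph.mem_neighborFinset, hadj]
        have hc2A : c2 ∉ A := by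
          simp only [hA, Finset.mem_filter, Finset.mem_univ, true_and]
          rw [hd12, SimpleGraph.dist_self]
          omega
        have hsub : G.neighborFinset c1 ∩ A ⊆ (G.neighborFinset c1).erase c2 := by
          intro y hy
          rw [Finset.mem_inter] at hy
          refine Finset.mem_erase.mpr ⟨?_, hy.1⟩
          rintro rfl; exact hc2A hy.2
        calc (G.neighborFinset c1 ∩ A).card ≤ ((G.neighborFinset c1).erase c2).card :=
              Finset.card_le_card hsub
          _ = G.degree c1 - 1 := by
              rw [Finset.card_erase_of_mem hc2mem, SimpleGraph.card_neighborFinset_eq_degree]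
          _ ≤ X - 1 := by have := hdeg c1; omega
      · intro u hu j hj
        simp only [hA, Finset.mem_filter, Finset.mem_univ, true_and] at hu
        obtain ⟨w, hw1, hw2⟩ := aux_pred hconn c1 u j hj
        refine ⟨w, ?_, hw1, hw2⟩
        simp only [hA, Finset.mem_filter, Finset.mem_univ, true_and]
        have ht : G.dist c2 u ≤ G.dist c2 w + G.dist w u := hconn.dist_triangle
        have hwu : G.dist w u = 1 := SimpleGraph.dist_eq_one_iff_adj.mpr hw1
        omega
      · intro u hu
        simp only [hA, Finset.mem_filter, Finset.mem_univ, true_and] at hu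
        rcases hmin u with h | h
        · exact h
        · omega
    have hcountB : B.card ≤ 1 + (X - 1) * ∑ j ∈ Finset.range k, (X - 1) ^ j := by
      refine aux_count hconn X (X - 1) k (by omega) hdeg B c2 ?_ ?_ ?_
      · have hc1mem : c1 ∈ G.neighborFinset c2 := by
          simp [SimpleGraph.mem_neighborFinset, hadj.symm]
        have hc1B : c1 ∉ B := by
          simp only [hB, Finset.mem_filter, Finset.mem_univ, true_and]
          exact not_not_intro (by rw [SimpleGraph.dist_self]; exact Nat.zero_le _)
        have hsub : G.neighborFinset c2 ∩ B ⊆ (G.neighborFinset c2).erase c1 := by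
          intro y hy
          rw [Finset.mem_inter] at hy
          refine Finset.mem_erase.mpr ⟨?_, hy.1⟩
          rintro rfl; exact hc1B hy.2
        calc (G.neighborFinset c2 ∩ B).card ≤ ((G.neighborFinset c2).erase c1).card :=
              Finset.card_le_card hsub
          _ = G.degree c2 - 1 := by
              rw [Finset.card_erase_of_mem hc1mem, SimpleGraph.card_neighborFinset_eq_degree]
          _ ≤ X - 1 := by have := hdeg c2; omega
      · intro u hu j hj
        simp only [hB, Finset.mem_filter, Finset.mem_univ, true_and] at hu
        obtain ⟨w, hw1, hw2⟩ := aux_pred hconn c2 u j hj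
        refine ⟨w, ?_, hw1, hw2⟩
        simp only [hB, Finset.mem_filter, Finset.mem_univ, true_and]
        have ht : G.dist c1 u ≤ G.dist c1 w + G.dist w u := hconn.dist_triangle
        have hwu : G.dist w u = 1 := SimpleGraph.dist_eq_one_iff_adj.mpr hw1
        omega
      · intro u hu
        simp only [hB, Finset.mem_filter, Finset.mem_univ, true_and] at hu
        rcases hmin u with h | h
        · omega
        · exact h
    have hNsum : N = A.card + B.card := by
      rw [hA, hB, Finset.card_filter_add_card_filter_not, hN, Finset.card_univ]
    have hcount : N ≤ 2 * ∑ j ∈ Finset.range (k + 1), (X - 1) ^ j := by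
      have hsum : ∑ j ∈ Finset.range (k + 1), (X - 1) ^ j
          = 1 + (X - 1) * ∑ j ∈ Finset.range k, (X - 1) ^ j := by
        rw [Finset.sum_range_succ' (fun j => (X-1)^j) k]
        simp only [pow_succ', pow_zero, ← Finset.mul_sum]
        ring
      omega
    -- conclude with the right term of the min
    refine le_trans (min_le_right _ _) ?_
    have hcR : (N : ℝ) ≤ 2 * ((R ^ (k+1) - 1) / (R - 1)) := by
      have := hgeom (k+1)
      exact_mod_cast (by exact_mod_cast hcount :
        (N:ℝ) ≤ 2 * ((∑ j ∈ Finset.range (k+1), (X - 1) ^ j : ℕ) : ℝ)).trans (by rw [this])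
    have harg : ((X : ℝ) - 2) * (N : ℝ) / 2 + 1 ≤ R ^ (k+1) := by
      have hR2 : (0 : ℝ) < R - 1 := by rw [hR]; linarith
      have h2 : (N : ℝ) * (R - 1) ≤ 2 * (R ^ (k+1) - 1) := by
        calc (N : ℝ) * (R - 1) ≤ (2 * ((R ^ (k+1) - 1) / (R - 1))) * (R - 1) := by
              apply mul_le_mul_of_nonneg_right hcR (le_of_lt hR2)
          _ = 2 * (R ^ (k+1) - 1) := by field_simp
      have hRX : R - 1 = (X : ℝ) - 2 := by rw [hR]; ring
      rw [hRX] at h2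
      nlinarith [h2]
    have hargpos : (0 : ℝ) < ((X : ℝ) - 2) * (N : ℝ) / 2 + 1 := by
      have : (0:ℝ) ≤ ((X : ℝ) - 2) * (N : ℝ) / 2 :=
        div_nonneg (mul_nonneg (by linarith) (by linarith)) (by norm_num)
      linarith
    have hlogb : Real.logb R (((X : ℝ) - 2) * (N : ℝ) / 2 + 1) ≤ (k + 1 : ℕ) := by
      have h1 := Real.logb_le_logb_of_le hR1 hargpos harg
      rwa [Real.logb_pow, Real.logb_self_eq_one (by linarith), mul_one] at h1
    have hceil : ⌈Real.logb R (((X : ℝ) - 2) * (N : ℝ) / 2 + 1)⌉ ≤ ((k + 1 : ℕ) : ℤ) :=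
      Int.ceil_le.mpr (by exact_mod_cast hlogb)
    simp only [hR, hN] at hceil ⊢
    push_cast
    push_cast at hceil
    omega
end

section
/- The transformation tr from tree representations to molecular trees is injective on any set of tree representations with the same number of vertices (and the same fixed numbering convention for cycle edges): if G1 and G2 are tree representations with the same number of vertices and tr(G1) = tr(G2), then G1 = G2. -/
/-! ### Molecular graphs and molecular trees -/

/-- A molecular graph `G = (V, E, ℓ, b)`: vertices are `Fin k` (representing
`{1, …, k}`, `k ≥ 1`); the undirected edges are the unordered pairs `e` with
`bond e > 0` (no self-loops), labelled by `bond`; `ℓ` is given by `label`. -/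
structure MolGraph (El : Type) where
  k : ℕ
  k_pos : 0 < k
  bond : Sym2 (Fin k) → ℕ
  bond_irrefl : ∀ v : Fin k, bond s(v, v) = 0
  label : Fin k → El

namespace MolGraph

variable {El : Type}

/-- The underlying simple graph of a molecular graph. -/
def toSimple (G : MolGraph El) : SimpleGraph (Fin G.k) where
  Adj u v := u ≠ v ∧ 0 < G.bond s(u, v)
  symm := by
    constructor
    intro u v h
    exact ⟨h.1.symm, by rw [Sym2.eq_swap]; exact h.2⟩
  loopless := ⟨fun v h => h.1 rfl⟩

/-- The root: vertex `1` of the molecular graph. -/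
def root (G : MolGraph El) : Fin G.k := ⟨0, G.k_pos⟩

/-- `Descend G v u` states that `u` belongs to the subtree rooted at `v`: every walk
from the root to `u` passes through `v`. -/
def Descend (G : MolGraph El) (v u : Fin G.k) : Prop :=
  ∀ p : G.toSimple.Walk G.root u, v ∈ p.support

/-- `G` is a molecular tree: it is connected and free of cycles, and the natural order
of the vertices corresponds to a depth-first search of the tree rooted at vertex `1`
(characterized by preorder numbering: every vertex is the minimum of its subtree and
each subtree is an interval of vertices). -/
def IsMolTree (G : MolGraph El) : Prop :=
  G.toSimple.IsTree ∧
  (∀ v u : Fin G.k, G.Descend v u → v ≤ u) ∧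
  (∀ v u w : Fin G.k, G.Descend v u → v ≤ w → w ≤ u → G.Descend v w)

end MolGraph

/-! ### Tree representations -/

/-- A tree representation `G = (V, T ∪ C, ℓ, b)` of a molecular graph: a molecular
tree `(V, T, ℓ, b)` (the tree edges `T` with their bond labels) together with the
cycle edges `C`.  The cycle edges are stored as the list `cycles` of triples
`(v, w, b)` with `v < w` and bond label `b > 0`, numbered `c_1, …, c_m` in the fixed
canonical way: sorted lexicographically by endpoints (which also makes them pairwise
distinct).  Cycle edges are disjoint from the tree edges. -/
structure TreeRep (El : Type) where
  tree : MolGraph El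
  tree_isMolTree : tree.IsMolTree
  cycles : List (Fin tree.k × Fin tree.k × ℕ)
  cyc_lt : ∀ c ∈ cycles, c.1 < c.2.1
  cyc_pos : ∀ c ∈ cycles, 0 < c.2.2
  cyc_sorted : cycles.Chain' (fun c d => c.1 < d.1 ∨ (c.1 = d.1 ∧ c.2.1 < d.2.1))
  cyc_disj : ∀ c ∈ cycles, tree.bond s(c.1, c.2.1) = 0

namespace TreeRep

variable {El : Type}

/-- The cycle edge `c_i` corresponding to the fresh vertex with (0-based) offset `j`;
the two fresh vertices with offsets `2i` and `2i+1` belong to the cycle edge `c_i`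
(0-based). -/
def cyc (G : TreeRep El) (j : ℕ) : Fin G.tree.k × Fin G.tree.k × ℕ :=
  G.cycles.getD (j / 2) (G.tree.root, G.tree.root, 0)

/-- The endpoint of the corresponding cycle edge to which the fresh vertex with offset
`j` is attached: `min c_i` for the first fresh vertex of `c_i`, `max c_i` for the
second. -/
def anchor (G : TreeRep El) (j : ℕ) : Fin G.tree.k :=
  if j % 2 = 0 then (G.cyc j).1 else (G.cyc j).2.1

/-- The label of the fresh vertex with offset `j`: the label of the opposite endpoint
of its cycle edge. -/
def freshLabel (G : TreeRep El) (j : ℕ) : El :=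
  if j % 2 = 0 then G.tree.label (G.cyc j).2.1 else G.tree.label (G.cyc j).1

/-- The bond label of the new tree edge attaching the fresh vertex with offset `j`:
the bond label of its cycle edge. -/
def freshBond (G : TreeRep El) (j : ℕ) : ℕ := (G.cyc j).2.2

/-- Auxiliary (asymmetric) bond function of `tr G`: tree edges keep their bonds, and
each fresh vertex is attached to its anchor with the bond of its cycle edge. -/
def g (G : TreeRep El) (u v : Fin (G.tree.k + 2 * G.cycles.length)) : ℕ :=
  if hu : u.val < G.tree.k then
    if hv : v.val < G.tree.k then G.tree.bond s(⟨u.val, hu⟩, ⟨v.val, hv⟩)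
    else if G.anchor (v.val - G.tree.k) = ⟨u.val, hu⟩ then
      G.freshBond (v.val - G.tree.k)
    else 0
  else 0

/-- The transformation `tr`: the molecular tree obtained from a tree representation by
replacing each cycle edge `c_i = {v, w}` by two new edges `{min c_i, k+2i−1}` and
`{max c_i, k+2i}` to fresh vertices; each new edge inherits the bond label of the
cycle edge, and each fresh vertex receives the label of the opposite endpoint. -/
def tr (G : TreeRep El) : MolGraph El where
  k := G.tree.k + 2 * G.cycles.length
  k_pos := Nat.lt_of_lt_of_le G.tree.k_pos (Nat.le_add_right _ _)
  bond := Sym2.lift ⟨fun u v => max (G.g u v) (G.g v u), fun u v => max_comm _ _⟩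
  bond_irrefl := by
    intro v
    rw [Sym2.lift_mk]
    simp only [max_self]
    by_cases h : v.val < G.tree.k
    · simp only [g, dif_pos h]
      exact G.tree.bond_irrefl _
    · simp only [g, dif_neg h]
  label := fun v =>
    if h : v.val < G.tree.k then G.tree.label ⟨v.val, h⟩
    else G.freshLabel (v.val - G.tree.k)

end TreeRep

/-! The vertices `0, …, k-1` of `tr G` carry the tree `G.tree` unchanged, and the fresh vertex
with offset `j` is joined to exactly one old vertex, its anchor, by the positive bond of its
cycle edge. So once `k` is known, `tr G` determines the tree, and the anchors and bonds of the
fresh vertices `2i` and `2i + 1` recover the cycle edge `c_i`. -/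

namespace MolGraph

variable {El : Type}

theorem bond_cast {H₁ H₂ : MolGraph El} (h : H₁ = H₂) (u v : Fin H₁.k) :
    H₁.bond s(u, v) =
      H₂.bond s(u.cast (congrArg MolGraph.k h), v.cast (congrArg MolGraph.k h)) := by
  subst h; rfl

theorem label_cast {H₁ H₂ : MolGraph El} (h : H₁ = H₂) (u : Fin H₁.k) :
    H₁.label u = H₂.label (u.cast (congrArg MolGraph.k h)) := by
  subst h; rfl

end MolGraph

namespace TreeRep

variable {El : Type}

theorem ext_of_cast {G₁ G₂ : TreeRep El} (hk : G₁.tree.k = G₂.tree.k)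
    (hbond : ∀ u v, G₁.tree.bond s(u, v) = G₂.tree.bond s(u.cast hk, v.cast hk))
    (hlabel : ∀ u, G₁.tree.label u = G₂.tree.label (u.cast hk))
    (hcycles : G₁.cycles.map (Prod.map (Fin.cast hk) (Prod.map (Fin.cast hk) id)) = G₂.cycles) :
    G₁ = G₂ := by
  obtain ⟨⟨k, _, bond₁, _, label₁⟩, _, cycles₁, _⟩ := G₁
  obtain ⟨⟨_, _, bond₂, _, label₂⟩, _, cycles₂, _⟩ := G₂
  simp only at hk
  subst hk
  have hb : bond₁ = bond₂ := funext fun e => Sym2.ind (fun u v => hbond u v) e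
  have hl : label₁ = label₂ := funext hlabel
  simp only [Fin.cast_refl, Prod.map_id, List.map_id] at hcycles
  subst hb hl hcycles
  rfl

def inl (G : TreeRep El) (u : Fin G.tree.k) : Fin G.tr.k :=
  Fin.castAdd (2 * G.cycles.length) u

def fresh (G : TreeRep El) (j : Fin (2 * G.cycles.length)) : Fin G.tr.k :=
  Fin.natAdd G.tree.k j

theorem tr_bond_inl_inl (G : TreeRep El) (u v : Fin G.tree.k) :
    G.tr.bond s(G.inl u, G.inl v) = G.tree.bond s(u, v) := by
  show max (G.g _ _) (G.g _ _) = _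
  simp [g, inl, Sym2.eq_swap (a := v)]

theorem tr_bond_inl_fresh (G : TreeRep El) (u : Fin G.tree.k) (j : Fin (2 * G.cycles.length)) :
    G.tr.bond s(G.inl u, G.fresh j) = if G.anchor j = u then G.freshBond j else 0 := by
  show max (G.g _ _) (G.g _ _) = _
  simp [g, inl, fresh]

theorem tr_label_inl (G : TreeRep El) (u : Fin G.tree.k) :
    G.tr.label (G.inl u) = G.tree.label u :=
  dif_pos u.isLt

theorem cyc_eq_getElem (G : TreeRep El) {j : ℕ} (hj : j / 2 < G.cycles.length) :
    G.cyc j = G.cycles[j / 2] := by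
  simp [cyc, List.getElem?_eq_getElem hj]

theorem cycles_getElem (G : TreeRep El) {i : ℕ} (hi : i < G.cycles.length) :
    G.cycles[i] = (G.anchor (2 * i), G.anchor (2 * i + 1), G.freshBond (2 * i)) := by
  have hdiv : (2 * i + 1) / 2 = i := by omega
  simp [anchor, freshBond, G.cyc_eq_getElem (j := 2 * i) (by omega),
    G.cyc_eq_getElem (j := 2 * i + 1) (by omega), hdiv]

theorem freshBond_pos (G : TreeRep El) (j : Fin (2 * G.cycles.length)) : 0 < G.freshBond j := by
  have hj : (j : ℕ) / 2 < G.cycles.length := by omega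
  rw [freshBond, G.cyc_eq_getElem hj]
  exact G.cyc_pos _ (List.getElem_mem hj)

end TreeRep

/-- The transformation `tr` is injective on any set of tree representations with the
same number of vertices (and the same fixed numbering convention for cycle edges):
if `G₁` and `G₂` are tree representations with the same number of vertices and
`tr(G₁) = tr(G₂)`, then `G₁ = G₂`. -/
theorem tr_injective {El : Type} (G₁ G₂ : TreeRep El)
    (hk : G₁.tree.k = G₂.tree.k) (h : G₁.tr = G₂.tr) : G₁ = G₂ := by
  have hK : G₁.tr.k = G₂.tr.k := congrArg MolGraph.k h
  have hlen : 2 * G₁.cycles.length = 2 * G₂.cycles.length := by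
    change G₁.tree.k + _ = G₂.tree.k + _ at hK; omega
  have inl_cast (u : Fin G₁.tree.k) : (G₁.inl u).cast hK = G₂.inl (u.cast hk) := rfl
  have fresh_cast (j) : (G₁.fresh j).cast hK = G₂.fresh (j.cast hlen) :=
    Fin.ext (congrArg (· + (j : ℕ)) hk)
  have anchor_freshBond_eq (j : Fin (2 * G₁.cycles.length)) :
      G₂.anchor j = (G₁.anchor j).cast hk ∧ G₂.freshBond j = G₁.freshBond j := by
    have e := MolGraph.bond_cast h (G₁.inl (G₁.anchor j)) (G₁.fresh j)
    rw [G₁.tr_bond_inl_fresh, if_pos rfl, inl_cast, fresh_cast, G₂.tr_bond_inl_fresh] at e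
    split_ifs at e with hanchor
    · exact ⟨hanchor, e.symm⟩
    · exact absurd e (G₁.freshBond_pos j).ne'
  refine TreeRep.ext_of_cast hk (fun u v => ?_) (fun u => ?_) ?_
  · rw [← G₁.tr_bond_inl_inl, ← G₂.tr_bond_inl_inl]
    exact MolGraph.bond_cast h _ _
  · rw [← G₁.tr_label_inl, ← G₂.tr_label_inl]
    exact MolGraph.label_cast h _
  · refine List.ext_getElem (by simpa using hlen) fun i hi₁ hi₂ => ?_
    obtain ⟨hmin, hbond⟩ := anchor_freshBond_eq ⟨2 * i, by simpa using hi₁⟩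
    obtain ⟨hmax, -⟩ := anchor_freshBond_eq ⟨2 * i + 1, by simp at hi₁; omega⟩
    simp only [List.getElem_map, TreeRep.cycles_getElem, Prod.map_apply, id_eq]
    rw [hmin, hmax, hbond]
end
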